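/- arXiv:2001.11871 — 4 statements merged into one kernel-verified Lean document; each statement's English description precedes it below -/
import Mathlib

section
/- Let z₁, z₂, z₃ be three pairwise non-parallel unit complex numbers (directions η_{b₁}, η_{b₂}, η_{b₃} with η_{b_j}² pairwise distinct), and let c₁ ∈ η_{b₁}ℝ, c₂ ∈ η_{b₂}ℝ, c₃ ∈ η_{b₃}ℝ be given values. Let d₁, d₂, d₃ ∈ ℂ be nonzero numbers with d₁ + d₂ + d₃ = 0 and η_{b_k}² · d_k = conj(d_k) for each k (i.e. d_k is parallel to conj(η_{b_k})ℝ). Then the system of three real-linear equations F + η_{b_k}²·conj(F) = 2c_k (k = 1,2,3) has a solution F ∈ ℂ if and only if c₁d₁ + c₂d₂ + c₃d₃ = 0. -/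
/-!
The left-hand sides `F + η_k² conj F` of the three equations are real-linear in `F`, and the
weights `d_k` kill every such combination:
`∑ (F + η_k² conj F) d_k = F ∑ d_k + conj F ∑ conj d_k = 0`. This gives necessity.
Conversely, two non-parallel lines already determine `F`, and the same identity together with
`d₃ ≠ 0` forces the third equation.
-/

open Complex ComplexConjugate

namespace Complex

theorem mul_conj_eq_one_of_norm_eq_one {z : ℂ} (hz : ‖z‖ = 1) : z * conj z = 1 := by
  rw [mul_conj', hz]; norm_num

theorem sum_add_mul_conj_mul_eq_zero {ι : Type*} (s : Finset ι) (μ d : ι → ℂ) (F : ℂ)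
    (hsum : ∑ i ∈ s, d i = 0) (hμ : ∀ i ∈ s, μ i * d i = conj (d i)) :
    ∑ i ∈ s, (F + μ i * conj F) * d i = 0 := by
  have hconj : ∑ i ∈ s, μ i * d i = 0 := by
    rw [Finset.sum_congr rfl hμ, ← map_sum, hsum, map_zero]
  calc ∑ i ∈ s, (F + μ i * conj F) * d i
      = F * ∑ i ∈ s, d i + conj F * ∑ i ∈ s, μ i * d i := by
        simp only [add_mul, Finset.sum_add_distrib, Finset.mul_sum]
        congr 1
        exact Finset.sum_congr rfl fun i _ ↦ by ring
    _ = 0 := by rw [hsum, hconj, mul_zero, mul_zero, add_zero]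

theorem sq_mul_conj_eq_of_eq_ofReal_mul {η c : ℂ} (hη : ‖η‖ = 1) {r : ℝ} (hc : c = r * η) :
    η ^ 2 * conj c = c := by
  rw [hc, map_mul, conj_ofReal]
  linear_combination (r * η) * mul_conj_eq_one_of_norm_eq_one hη

theorem exists_add_mul_conj_eq_two_mul {μ₁ μ₂ c₁ c₂ : ℂ} (hμ₁ : ‖μ₁‖ = 1) (hμ₂ : ‖μ₂‖ = 1)
    (hμ : μ₁ ≠ μ₂) (hc₁ : μ₁ * conj c₁ = c₁) (hc₂ : μ₂ * conj c₂ = c₂) :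
    ∃ F : ℂ, F + μ₁ * conj F = 2 * c₁ ∧ F + μ₂ * conj F = 2 * c₂ := by
  have hsub : μ₂ - μ₁ ≠ 0 := sub_ne_zero.mpr hμ.symm
  have hunit₁ := mul_conj_eq_one_of_norm_eq_one hμ₁
  have hunit₂ := mul_conj_eq_one_of_norm_eq_one hμ₂
  -- As `conj μ_k = μ_k⁻¹` and `conj c_k = c_k / μ_k`, this `F` has
  -- `conj F = 2 (c₂ - c₁) / (μ₂ - μ₁)`.
  set F := 2 * (c₁ * μ₂ - c₂ * μ₁) / (μ₂ - μ₁)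
  have hFmul : F * (μ₂ - μ₁) = 2 * (c₁ * μ₂ - c₂ * μ₁) := div_mul_cancel₀ _ hsub
  have hconjF : conj F * (μ₂ - μ₁) = 2 * (c₂ - c₁) := by
    have h := congrArg conj hFmul
    simp only [map_mul, map_sub, map_ofNat] at h
    linear_combination -μ₁ * μ₂ * h + conj F * (μ₁ * hunit₂ - μ₂ * hunit₁) - 2 * c₁ * hunit₂
      + 2 * c₂ * hunit₁ - 2 * μ₂ * conj μ₂ * hc₁ + 2 * μ₁ * conj μ₁ * hc₂
  refine ⟨F, mul_right_cancel₀ hsub ?_, mul_right_cancel₀ hsub ?_⟩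
  · linear_combination hFmul + μ₁ * hconjF
  · linear_combination hFmul + μ₂ * hconjF

end Complex

theorem stmt1_general (η₁ η₂ η₃ c₁ c₂ c₃ d₁ d₂ d₃ : ℂ)
    (hη₁ : ‖η₁‖ = 1) (hη₂ : ‖η₂‖ = 1)
    (h12 : η₁ ^ 2 ≠ η₂ ^ 2)
    (hc₁ : ∃ r : ℝ, c₁ = (r : ℂ) * η₁) (hc₂ : ∃ r : ℝ, c₂ = (r : ℂ) * η₂)
    (hd₃ : d₃ ≠ 0)
    (hsum : d₁ + d₂ + d₃ = 0)
    (hp₁ : η₁ ^ 2 * d₁ = conj d₁) (hp₂ : η₂ ^ 2 * d₂ = conj d₂)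
    (hp₃ : η₃ ^ 2 * d₃ = conj d₃) :
    (∃ F : ℂ, F + η₁ ^ 2 * conj F = 2 * c₁ ∧ F + η₂ ^ 2 * conj F = 2 * c₂ ∧
        F + η₃ ^ 2 * conj F = 2 * c₃) ↔
      c₁ * d₁ + c₂ * d₂ + c₃ * d₃ = 0 := by
  have closed (F : ℂ) : (F + η₁ ^ 2 * conj F) * d₁ + (F + η₂ ^ 2 * conj F) * d₂
      + (F + η₃ ^ 2 * conj F) * d₃ = 0 := by
    simpa [Fin.sum_univ_three] using
      sum_add_mul_conj_mul_eq_zero Finset.univ ![η₁ ^ 2, η₂ ^ 2, η₃ ^ 2] ![d₁, d₂, d₃] F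
        (by simpa [Fin.sum_univ_three] using hsum) (by simp [Fin.forall_fin_succ, hp₁, hp₂, hp₃])
  constructor
  · rintro ⟨F, h₁, h₂, h₃⟩
    linear_combination (closed F - d₁ * h₁ - d₂ * h₂ - d₃ * h₃) / 2
  · intro hcd
    obtain ⟨r₁, rfl⟩ := hc₁
    obtain ⟨r₂, rfl⟩ := hc₂
    obtain ⟨F, h₁, h₂⟩ := exists_add_mul_conj_eq_two_mul (by simp [hη₁]) (by simp [hη₂]) h12
      (sq_mul_conj_eq_of_eq_ofReal_mul hη₁ rfl) (sq_mul_conj_eq_of_eq_ofReal_mul hη₂ rfl)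
    refine ⟨F, h₁, h₂, mul_right_cancel₀ hd₃ ?_⟩
    linear_combination closed F - d₁ * h₁ - d₂ * h₂ - 2 * hcd

theorem stmt1 (η₁ η₂ η₃ c₁ c₂ c₃ d₁ d₂ d₃ : ℂ)
    (hη₁ : ‖η₁‖ = 1) (hη₂ : ‖η₂‖ = 1) (hη₃ : ‖η₃‖ = 1)
    (h12 : η₁ ^ 2 ≠ η₂ ^ 2) (h13 : η₁ ^ 2 ≠ η₃ ^ 2) (h23 : η₂ ^ 2 ≠ η₃ ^ 2)
    (hc₁ : ∃ r : ℝ, c₁ = (r : ℂ) * η₁) (hc₂ : ∃ r : ℝ, c₂ = (r : ℂ) * η₂)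
    (hc₃ : ∃ r : ℝ, c₃ = (r : ℂ) * η₃)
    (hd₁ : d₁ ≠ 0) (hd₂ : d₂ ≠ 0) (hd₃ : d₃ ≠ 0)
    (hsum : d₁ + d₂ + d₃ = 0)
    (hp₁ : η₁ ^ 2 * d₁ = conj d₁) (hp₂ : η₂ ^ 2 * d₂ = conj d₂)
    (hp₃ : η₃ ^ 2 * d₃ = conj d₃) :
    (∃ F : ℂ, F + η₁ ^ 2 * conj F = 2 * c₁ ∧ F + η₂ ^ 2 * conj F = 2 * c₂ ∧
        F + η₃ ^ 2 * conj F = 2 * c₃) ↔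
      c₁ * d₁ + c₂ * d₂ + c₃ * d₃ = 0 :=
  stmt1_general η₁ η₂ η₃ c₁ c₂ c₃ d₁ d₂ d₃ hη₁ hη₂ h12 hc₁ hc₂ hd₃ hsum hp₁ hp₂ hp₃
end

section
/- Let F : ℂ → ℂ be a map of the form F(z) = z + φ(z) (or z + conj(φ(z))) where φ is 1-Lipschitz and satisfies |φ(z') - φ(z)| ≤ κ·|z' - z| whenever |z' - z| ≥ δ, for some κ < 1. Then for every z and r ≥ δ, the image of the disc B(z, r) under F satisfies B(F(z), (1-κ)r) ⊆ F(B(z,r)) ⊆ B(F(z), (1+κ)r). -/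
/-!
For the upper inclusion, compare `φ u` with `φ z` directly when `dist u z ≥ δ`, and otherwise
through a point `c` with `dist c z = δ` lying beyond `u` on the ray from `z`.
For the lower inclusion, `w ↦ w + α • φ w` is onto for `0 ≤ α < 1` by the contraction principle.
The preimages of `y` lie within `r + (1 - α) ‖φ z‖ / (1 - κ)` of `z`, and by compactness a limit
point as `α → 1` is a preimage of `y` under `w ↦ w + φ w` in `closedBall z r`.
-/

open Metric Filter Topology

theorem LipschitzWith.surjective_id_add {E : Type*} [NormedAddCommGroup E] [CompleteSpace E]
    {K : NNReal} {ψ : E → E} (hψ : LipschitzWith K ψ) (hK : K < 1) :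
    Function.Surjective fun w ↦ w + ψ w := by
  intro y
  have hC : ContractingWith K fun w ↦ y - ψ w :=
    ⟨hK, fun a b ↦ by simpa only [edist_sub_left] using hψ a b⟩
  refine ⟨hC.fixedPoint, ?_⟩
  exact (sub_eq_iff_eq_add.1 hC.fixedPoint_isFixedPt).symm

section

variable {E : Type*} [NormedAddCommGroup E]

/-- The assumption `Lip(κ, δ)` on the origami map. -/
def LipschitzAtScale (κ δ : ℝ) (φ : E → E) : Prop :=
  ∀ z z' : E, δ ≤ dist z z' → dist (φ z) (φ z') ≤ κ * dist z z'

variable {φ : E → E} {κ δ r : ℝ}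

lemma exists_dist_eq_sub_dist [NormedSpace ℝ E] [Nontrivial E] {u z : E} (h : dist u z ≤ δ) :
    ∃ c, dist c z = δ ∧ dist c u = δ - dist u z := by
  obtain ⟨v, hv, huz⟩ : ∃ v : E, ‖v‖ = 1 ∧ u - z = dist u z • v := by
    by_cases hu : u = z
    · obtain ⟨v, hv⟩ := exists_norm_eq E zero_le_one
      exact ⟨v, hv, by simp [hu]⟩
    · refine ⟨‖u - z‖⁻¹ • (u - z), norm_smul_inv_norm (sub_ne_zero.2 hu), ?_⟩
      rw [dist_eq_norm, smul_inv_smul₀ (norm_ne_zero_iff.2 (sub_ne_zero.2 hu))]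
  have hδ : 0 ≤ δ := dist_nonneg.trans h
  refine ⟨z + δ • v, ?_, ?_⟩
  · simp [dist_eq_norm, norm_smul, hv, abs_of_nonneg hδ]
  · have hcu : z + δ • v - u = (δ - dist u z) • v := by
      rw [sub_smul, ← huz]; abel
    rw [dist_eq_norm, hcu, norm_smul, hv, mul_one, Real.norm_of_nonneg (sub_nonneg.2 h)]

lemma LipschitzAtScale.dist_le_of_dist_le [NormedSpace ℝ E] [Nontrivial E]
    (hφ : LipschitzAtScale κ δ φ) (hlip : LipschitzWith 1 φ) {u z : E} (h : dist u z ≤ δ) :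
    dist (φ u) (φ z) ≤ δ - dist u z + κ * δ := by
  obtain ⟨c, hcz, hcu⟩ := exists_dist_eq_sub_dist h
  calc dist (φ u) (φ z) ≤ dist (φ u) (φ c) + dist (φ c) (φ z) := dist_triangle _ _ _
    _ ≤ dist u c + κ * dist c z := by
        gcongr
        · simpa using hlip.dist_le_mul u c
        · exact hφ c z hcz.ge
    _ = δ - dist u z + κ * δ := by rw [dist_comm, hcu, hcz]

lemma LipschitzAtScale.nonneg [NormedSpace ℝ E] [Nontrivial E] (hφ : LipschitzAtScale κ δ φ) :
    0 ≤ κ := by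
  obtain ⟨x, hx⟩ := exists_norm_eq E (zero_le_one.trans (le_max_right δ 1))
  have hpos : 0 < dist x 0 := by rw [dist_zero_right, hx]; positivity
  have hx_scale := hφ x 0 (by rw [dist_zero_right, hx]; exact le_max_left δ 1)
  nlinarith [dist_nonneg (x := φ x) (y := φ 0)]

lemma LipschitzAtScale.image_closedBall_subset [NormedSpace ℝ E] [Nontrivial E]
    (hφ : LipschitzAtScale κ δ φ) (hlip : LipschitzWith 1 φ) {z : E} (hr : δ ≤ r) :
    (fun w ↦ w + φ w) '' closedBall z r ⊆ closedBall (z + φ z) ((1 + κ) * r) := by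
  rintro _ ⟨u, hu, rfl⟩
  rw [mem_closedBall] at hu ⊢
  refine (dist_add_add_le u (φ u) z (φ z)).trans ?_
  rcases le_or_gt δ (dist u z) with hδu | hδu
  · nlinarith [hφ u z hδu, hφ.nonneg]
  · nlinarith [hφ.dist_le_of_dist_le hlip hδu.le, hφ.nonneg]

lemma LipschitzAtScale.dist_le_of_add_smul_eq [NormedSpace ℝ E] (hφ : LipschitzAtScale κ δ φ)
    (hκ : κ < 1) (hr : δ ≤ r) {α : ℝ} (hα₀ : 0 ≤ α) (hα₁ : α ≤ 1) {w y z : E}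
    (hw : w + α • φ w = y) (hy : dist y (z + φ z) ≤ (1 - κ) * r) :
    dist w z ≤ r + (1 - α) * ‖φ z‖ / (1 - κ) := by
  have h1κ : 0 < 1 - κ := sub_pos.2 hκ
  rcases lt_or_ge (dist w z) δ with hδw | hδw
  · have hα₁' := sub_nonneg.2 hα₁
    have hslack : 0 ≤ (1 - α) * ‖φ z‖ / (1 - κ) := by positivity
    linarith
  have hdecomp : w - z = (y - (z + φ z)) + α • (φ z - φ w) + (1 - α) • φ z := by
    rw [← hw]; module
  have hαφ : α * dist (φ z) (φ w) ≤ κ * dist w z := by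
    rw [dist_comm w z]
    nlinarith [hφ z w (by rwa [dist_comm]), dist_nonneg (x := φ z) (y := φ w)]
  have hbound : dist w z ≤ (1 - κ) * r + κ * dist w z + (1 - α) * ‖φ z‖ := by
    calc dist w z = ‖(y - (z + φ z)) + α • (φ z - φ w) + (1 - α) • φ z‖ := by
          rw [dist_eq_norm, hdecomp]
      _ ≤ ‖y - (z + φ z)‖ + ‖α • (φ z - φ w)‖ + ‖(1 - α) • φ z‖ := norm_add₃_le
      _ = dist y (z + φ z) + α * dist (φ z) (φ w) + (1 - α) * ‖φ z‖ := by
          rw [norm_smul, norm_smul, Real.norm_of_nonneg hα₀,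
            Real.norm_of_nonneg (sub_nonneg.2 hα₁), dist_eq_norm, dist_eq_norm]
      _ ≤ (1 - κ) * r + κ * dist w z + (1 - α) * ‖φ z‖ := by gcongr
  rw [← sub_le_iff_le_add', le_div_iff₀ h1κ]
  linarith

lemma exists_mem_closedBall_add_eq_of_tendsto [NormedSpace ℝ E] [ProperSpace E]
    (hφ : Continuous φ) {α β : ℕ → ℝ} (hα : Tendsto α atTop (𝓝 1))
    (hβ : Tendsto β atTop (𝓝 0)) {w : ℕ → E} {y z : E} (hw : ∀ n, w n + α n • φ (w n) = y)
    (hwz : ∀ n, dist (w n) z ≤ r + β n) : ∃ p ∈ closedBall z r, p + φ p = y := by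
  obtain ⟨B, hB⟩ := hβ.bddAbove_range
  have hwB : ∀ n, w n ∈ closedBall z (r + B) := fun n ↦
    (hwz n).trans (add_le_add_right (hB ⟨n, rfl⟩) r)
  obtain ⟨p, -, g, hg, hwp⟩ := (isCompact_closedBall z (r + B)).tendsto_subseq hwB
  refine ⟨p, ?_, ?_⟩
  · simpa using le_of_tendsto_of_tendsto' (hwp.dist tendsto_const_nhds)
      (tendsto_const_nhds.add (hβ.comp hg.tendsto_atTop)) fun k ↦ hwz (g k)
  · have hlim := hwp.add ((hα.comp hg.tendsto_atTop).smul ((hφ.tendsto p).comp hwp))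
    simp only [Function.comp_def, hw, one_smul] at hlim
    exact (tendsto_nhds_unique tendsto_const_nhds hlim).symm

lemma LipschitzAtScale.closedBall_subset_image [NormedSpace ℝ E] [ProperSpace E]
    (hφ : LipschitzAtScale κ δ φ) (hlip : LipschitzWith 1 φ) (hκ : κ < 1) (hr : δ ≤ r) (z : E) :
    closedBall (z + φ z) ((1 - κ) * r) ⊆ (fun w ↦ w + φ w) '' closedBall z r := by
  intro y hy
  obtain ⟨α, -, hα, hα1⟩ := exists_seq_strictMono_tendsto' (zero_lt_one' ℝ)
  have hsurj : ∀ n, ∃ w, w + α n • φ w = y := fun n ↦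
    ((lipschitzWith_smul (α n)).comp hlip).surjective_id_add (by
      rw [mul_one, ← NNReal.coe_lt_coe, coe_nnnorm, Real.norm_of_nonneg (hα n).1.le]
      exact (hα n).2) y
  choose w hw using hsurj
  have hβ : Tendsto (fun n ↦ (1 - α n) * ‖φ z‖ / (1 - κ)) atTop (𝓝 0) := by
    simpa using (((tendsto_const_nhds (x := (1 : ℝ))).sub hα1).mul_const ‖φ z‖).div_const (1 - κ)
  exact exists_mem_closedBall_add_eq_of_tendsto hlip.continuous hα1 hβ hw fun n ↦
    hφ.dist_le_of_add_smul_eq hκ hr (hα n).1.le (hα n).2.le (hw n) hy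

end

theorem stmt8_general (φ : ℂ → ℂ) (κ δ : ℝ) (hκ : κ < 1)
    (hlip : LipschitzWith 1 φ)
    (hLip : ∀ z z' : ℂ, δ ≤ dist z z' → dist (φ z) (φ z') ≤ κ * dist z z')
    (F : ℂ → ℂ) (hF : ∀ z, F z = z + φ z) (z : ℂ) (r : ℝ) (hr : δ ≤ r) :
    Metric.closedBall (F z) ((1 - κ) * r) ⊆ F '' Metric.closedBall z r ∧
    F '' Metric.closedBall z r ⊆ Metric.closedBall (F z) ((1 + κ) * r) := by
  obtain rfl : F = fun w ↦ w + φ w := funext hF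
  exact ⟨LipschitzAtScale.closedBall_subset_image hLip hlip hκ hr z,
    LipschitzAtScale.image_closedBall_subset hLip hlip hr⟩

theorem stmt8 (φ : ℂ → ℂ) (κ δ : ℝ) (hκ : κ < 1) (hδ : 0 < δ)
    (hlip : LipschitzWith 1 φ)
    (hLip : ∀ z z' : ℂ, δ ≤ dist z z' → dist (φ z) (φ z') ≤ κ * dist z z')
    (F : ℂ → ℂ) (hF : ∀ z, F z = z + φ z) (z : ℂ) (r : ℝ) (hr : δ ≤ r) :
    Metric.closedBall (F z) ((1 - κ) * r) ⊆ F '' Metric.closedBall z r ∧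
    F '' Metric.closedBall z r ⊆ Metric.closedBall (F z) ((1 + κ) * r) :=
  stmt8_general φ κ δ hκ hlip hLip F hF z r hr
end

section
/- Let b₁, …, b_n be unit complex numbers and θ₁, …, θ_n ∈ (0, π) be angles with θ₁ + ⋯ + θ_n = π (angles of white faces around a vertex of a t-embedding). Define φ_k := arg(η_{b_k}) mod π ∈ (-π/2, π/2], where the increments satisfy φ_{b_k} - φ_{b_{k-1}} ≡ -θ_k (mod π) cyclically. Then among the n cyclic increments φ_{b_k} - φ_{b_{k-1}}, exactly one is equal to π - θ_k (positive) and the remaining n-1 are equal to -θ_k (negative); consequently ∑ over all k with negative increment of (tan φ_{b_{k-1}} - tan φ_{b_k}) equals tan φ_{b_{k₀}} - tan φ_{b_{k₀-1}} where k₀ is the unique index with positive increment. -/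
theorem stmt10 (n : ℕ) (θ φ : Fin (n + 1) → ℝ)
    (hθ : ∀ k, θ k ∈ Set.Ioo 0 Real.pi)
    (hsum : ∑ k, θ k = Real.pi)
    (hφ : ∀ k, φ k ∈ Set.Ioc (-(Real.pi / 2)) (Real.pi / 2))
    (hmod : ∀ k, ∃ m : ℤ, φ k - φ (k - 1) = -θ k + m * Real.pi) :
    ∃ k₀ : Fin (n + 1),
      φ k₀ - φ (k₀ - 1) = Real.pi - θ k₀ ∧
      (∀ k, k ≠ k₀ → φ k - φ (k - 1) = -θ k) ∧
      ∑ k ∈ Finset.univ.erase k₀, (Real.tan (φ (k - 1)) - Real.tan (φ k))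
        = Real.tan (φ k₀) - Real.tan (φ (k₀ - 1)) := by
  choose m hm using hmod
  have hπ := Real.pi_pos
  have hshift : ∀ f : Fin (n+1) → ℝ, ∑ k, f (k - 1) = ∑ k, f k := by
    intro f
    exact Fintype.sum_equiv (Equiv.subRight 1) _ _ (fun k => rfl)
  have htel : ∑ k, (φ k - φ (k-1)) = 0 := by
    rw [Finset.sum_sub_distrib, hshift φ, sub_self]
  have hmsum : ∑ k, (m k : ℝ) = 1 := by
    have h0 : ∑ k, (-θ k + (m k : ℝ) * Real.pi) = 0 := by
      rw [← htel]; exact Finset.sum_congr rfl fun k _ => (hm k).symm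
    rw [Finset.sum_add_distrib, Finset.sum_neg_distrib, hsum, ← Finset.sum_mul] at h0
    have : (∑ k, (m k : ℝ)) * Real.pi = 1 * Real.pi := by linarith
    exact mul_right_cancel₀ hπ.ne' this
  have hm01 : ∀ k, m k = 0 ∨ m k = 1 := by
    intro k
    have h1 := (hφ k).1; have h2 := (hφ k).2
    have h3 := (hφ (k-1)).1; have h4 := (hφ (k-1)).2
    have hθ1 := (hθ k).1; have hθ2 := (hθ k).2
    have heq := hm k
    have hlt : ((m k : ℝ)) < 2 := by nlinarith
    have hgt : (-1 : ℝ) < (m k : ℝ) := by nlinarith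
    have hl : m k < 2 := by exact_mod_cast hlt
    have hg : (-1:ℤ) < m k := by exact_mod_cast hgt
    omega
  have hsum1 : ∑ k, m k = 1 := by
    have : ((∑ k, m k : ℤ) : ℝ) = 1 := by push_cast; exact hmsum
    exact_mod_cast this
  have hcard : (Finset.univ.filter (fun k => m k = 1)).card = 1 := by
    have h : (((Finset.univ.filter (fun k => m k = 1)).card : ℤ)) = ∑ k, m k := by
      rw [Finset.card_filter]
      push_cast
      apply Finset.sum_congr rfl
      intro k _
      rcases hm01 k with h | h <;> simp [h]
    omega
  obtain ⟨k₀, hk₀⟩ := Finset.card_eq_one.mp hcard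
  have hmk₀ : m k₀ = 1 := by
    have : k₀ ∈ Finset.univ.filter (fun k => m k = 1) := by
      rw [hk₀]; exact Finset.mem_singleton_self k₀
    simpa using this
  have hother : ∀ k, k ≠ k₀ → m k = 0 := by
    intro k hk
    rcases hm01 k with h | h
    · exact h
    · exfalso
      have : k ∈ Finset.univ.filter (fun k => m k = 1) := by simp [h]
      rw [hk₀, Finset.mem_singleton] at this
      exact hk this
  refine ⟨k₀, ?_, ?_, ?_⟩
  · have := hm k₀; rw [hmk₀] at this; push_cast at this; linarith
  · intro k hk
    have := hm k; rw [hother k hk] at this; push_cast at this; linarith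
  · have htan : ∑ k, (Real.tan (φ (k-1)) - Real.tan (φ k)) = 0 := by
      rw [Finset.sum_sub_distrib, hshift (fun k => Real.tan (φ k)), sub_self]
    rw [Finset.sum_erase_eq_sub (Finset.mem_univ k₀), htan]
    ring
end

section
/- Consider an orthodiagonal embedding: Γ and its dual Γ* embedded in ℂ so that each face is a quadrilateral (b₋, b₋*, b₊, b₊*) whose diagonals (b₋b₊) (an edge of Γ) and (b₋*b₊*) (the dual edge) are orthogonal segments. Let T be the midpoint map sending the quad to the quadrilateral with vertices at the midpoints of its sides, and define dO on the quad's medial edges by η_w² dT on white faces, with η_w = ±i·e^{-i·arg(b₊-b₋)} on the quad and η = ±1 on faces of Γ, η = ±i on faces of Γ*. For a function F^• defined on Γ ∪ Γ* with values F^•|_Γ ∈ ℝ and F^•|_{Γ*} ∈ iℝ, the contour integral of F^• dT around the medial quadrilateral of a quad u^∘ equals -η_{u^∘}²·(b₊-b₋)(b₊*-b₋*)·[∂̄ F^•](u^∘), where [∂̄F](u^∘) := (1/2)·( (F(b₊)-F(b₋))/(conj(b₊)-conj(b₋)) + (F(b₊*)-F(b₋*))/(conj(b₊*)-conj(b₋*))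 ). Consequently, F^• is t-white-holomorphic iff [∂̄ F^•](u^∘) = 0 at every quad. -/
/-!
Write `d = b₊ - b₋` and `s = b₊* - b₋*`. Orthogonality of the diagonals, `s = i t d` with `t` real
and nonzero, gives `s / conj s = -(d / conj d)`. Multiplying `[∂̄ F]` by
`-η² d s = conj d · s` therefore turns the two difference quotients into `(F(b₊) - F(b₋)) s` and
`-(F(b₊*) - F(b₋*)) d`, which is twice the contour integral of `F dT` around the medial
quadrilateral, whose sides are `±s/2` and `±d/2`. The prefactor is nonzero, so the contour
integral vanishes exactly when `[∂̄ F]` does.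
-/

open Complex ComplexConjugate

/-- `∮ F dT` around the medial quadrilateral of the quad `(b₋, b₋*, b₊, b₊*)`, with `F` taking the
values `fm fp gm gp` at `b₋ b₊ b₋* b₊*`: the medial side cutting off a vertex is half the diagonal
not through it. -/
noncomputable def medialContourIntegral (bm bp bsm bsp fm fp gm gp : ℂ) : ℂ :=
  fm * ((bsm - bsp) / 2) + gm * ((bp - bm) / 2) + fp * ((bsp - bsm) / 2) + gp * ((bm - bp) / 2)

noncomputable def orthodiagonalDbar (bm bp bsm bsp fm fp gm gp : ℂ) : ℂ :=
  (1 / 2 : ℂ) * ((fp - fm) / (conj bp - conj bm) + (gp - gm) / (conj bsp - conj bsm))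

section OrthogonalDiagonals

variable {d s : ℂ} {t : ℝ}

theorem div_conj_of_eq_I_mul (ht : t ≠ 0) (hd : d ≠ 0) (hs : s = I * t * d) :
    s / conj s = -(d / conj d) := by
  have ht' : (t : ℂ) ≠ 0 := ofReal_ne_zero.mpr ht
  have hcd : conj d ≠ 0 := (map_ne_zero _).mpr hd
  subst hs
  simp only [map_mul, conj_I, conj_ofReal]
  field_simp

theorem conj_div_mul_mul_half_add_div_conj (ht : t ≠ 0) (hd : d ≠ 0) (hs : s = I * t * d)
    (a b : ℂ) :
    conj d / d * d * s * ((1 / 2 : ℂ) * (a / conj d + b / conj s)) = (a * s - b * d) / 2 := by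
  have hcd : conj d ≠ 0 := (map_ne_zero _).mpr hd
  have hquot := div_conj_of_eq_I_mul ht hd hs
  calc conj d / d * d * s * ((1 / 2 : ℂ) * (a / conj d + b / conj s))
      = (a * s + b * conj d * (s / conj s)) / 2 := by field_simp
    _ = (a * s - b * d) / 2 := by rw [hquot]; field_simp; ring

end OrthogonalDiagonals

section OrthodiagonalQuad

variable {bm bp bsm bsp : ℂ} {t : ℝ}

theorem medialContourIntegral_eq_mul_orthodiagonalDbar (hne : bp ≠ bm) (ht : t ≠ 0)
    (hs : bsp - bsm = I * t * (bp - bm)) (fm fp gm gp : ℂ) :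
    medialContourIntegral bm bp bsm bsp fm fp gm gp
      = conj (bp - bm) / (bp - bm) * (bp - bm) * (bsp - bsm)
          * orthodiagonalDbar bm bp bsm bsp fm fp gm gp := by
  unfold orthodiagonalDbar
  rw [← map_sub, ← map_sub,
    conj_div_mul_mul_half_add_div_conj ht (sub_ne_zero.mpr hne) hs, medialContourIntegral]
  ring

theorem medialContourIntegral_eq_zero_iff (hne : bp ≠ bm) (ht : t ≠ 0)
    (hs : bsp - bsm = I * t * (bp - bm)) (fm fp gm gp : ℂ) :
    medialContourIntegral bm bp bsm bsp fm fp gm gp = 0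
      ↔ orthodiagonalDbar bm bp bsm bsp fm fp gm gp = 0 := by
  have hd : bp - bm ≠ 0 := sub_ne_zero.mpr hne
  have hfactor : conj (bp - bm) / (bp - bm) * (bp - bm) * (bsp - bsm) ≠ 0 := by
    rw [hs, div_mul_cancel₀ _ hd]
    exact mul_ne_zero ((map_ne_zero _).mpr hd)
      (mul_ne_zero (mul_ne_zero I_ne_zero (ofReal_ne_zero.mpr ht)) hd)
  rw [medialContourIntegral_eq_mul_orthodiagonalDbar hne ht hs, mul_eq_zero,
    or_iff_right hfactor]

end OrthodiagonalQuad

theorem stmt17 (bm bp bsm bsp : ℂ) (hne : bp ≠ bm)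
    (horth : ∃ t : ℝ, t ≠ 0 ∧ bsp - bsm = Complex.I * (t : ℂ) * (bp - bm))
    (η : ℂ) (hη : η ^ 2 = -(conj (bp - bm) / (bp - bm)))
    (Fm Fp Gm Gp : ℝ) :
    ((Fm : ℂ) * ((bsm - bsp) / 2) + (Complex.I * (Gm : ℂ)) * ((bp - bm) / 2)
        + (Fp : ℂ) * ((bsp - bsm) / 2) + (Complex.I * (Gp : ℂ)) * ((bm - bp) / 2))
      = -η ^ 2 * (bp - bm) * (bsp - bsm) *
        ((1 / 2 : ℂ) * (((Fp : ℂ) - (Fm : ℂ)) / (conj bp - conj bm)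
          + (Complex.I * (Gp : ℂ) - Complex.I * (Gm : ℂ)) / (conj bsp - conj bsm))) ∧
    (((Fm : ℂ) * ((bsm - bsp) / 2) + (Complex.I * (Gm : ℂ)) * ((bp - bm) / 2)
        + (Fp : ℂ) * ((bsp - bsm) / 2) + (Complex.I * (Gp : ℂ)) * ((bm - bp) / 2)) = 0 ↔
      ((1 / 2 : ℂ) * (((Fp : ℂ) - (Fm : ℂ)) / (conj bp - conj bm)
          + (Complex.I * (Gp : ℂ) - Complex.I * (Gm : ℂ)) / (conj bsp - conj bsm))) = 0) := by
  obtain ⟨t, ht, hs⟩ := horth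
  rw [hη, neg_neg]
  exact ⟨medialContourIntegral_eq_mul_orthodiagonalDbar hne ht hs _ _ _ _,
    medialContourIntegral_eq_zero_iff hne ht hs _ _ _ _⟩
end
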